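/- Let Φ(1) be the r×r matrix with Φ(1)(0, r−1) = x and Φ(1)(i, i−1) = 1 for 1 ≤ i ≤ r−1, over F = ℚ[x]/(x^N+1). For a nega-cyclic function f : ℤ_{2Nr} → ℚ (f(k+Nr) = −f(k)), define the test vector v_test ∈ F^r by v_test(b) = Σ_{a ∈ [N]} f(−(a r + b)) x^a for b ∈ [r]. Then for every m ∈ ℤ_{2Nr}, writing m = −d − c r with c ∈ [2N], d ∈ [r], the vector Φ(1)^m · v_test has first coordinate Σ_{a ∈ [N]} f(m − a r) x^a (coefficients read in ℚ via the nega-cyclic identification); in particular its constant term is f(m). -/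
import Mathlib

open Polynomial
open scoped Matrix

noncomputable abbrev Fq (N : ℕ) : Type :=
  Polynomial ℚ ⧸ Ideal.span ({X ^ N + 1} : Set (Polynomial ℚ))

noncomputable def xq (N : ℕ) : Fq N :=
  Ideal.Quotient.mk (Ideal.span ({X ^ N + 1} : Set (Polynomial ℚ))) X

lemma xq_pow (N : ℕ) : xq N ^ N = -1 := by
  have h : (Ideal.Quotient.mk (Ideal.span ({X ^ N + 1} : Set (Polynomial ℚ))) (X ^ N + 1) : Fq N) = 0 :=
    Ideal.Quotient.eq_zero_iff_mem.mpr (Ideal.mem_span_singleton_self _)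
  rw [map_add, map_pow, map_one] at h
  rw [xq]
  exact eq_neg_of_add_eq_zero_left h

noncomputable def Wte (N r : ℕ) (f : ZMod (2 * N * r) → ℚ) (m : ℕ) (i : Fin r) : Fq N :=
  ∑ a ∈ Finset.range N,
    algebraMap ℚ (Fq N) (f ((m : ZMod (2 * N * r)) - ((a * r + (i : ℕ) : ℕ) : ZMod (2 * N * r)))) *
      xq N ^ a

lemma key_lemma (N s : ℕ) (hN : 0 < N)
    (Φ : Matrix (Fin (s+1)) (Fin (s+1)) (Fq N))
    (hΦ : ∀ i j, Φ i j = if j = i - 1 then (if i = 0 then xq N else 1) else 0)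
    (f : ZMod (2 * N * (s+1)) → ℚ)
    (hf : ∀ k : ZMod (2 * N * (s+1)), f (k + (N * (s+1) : ℕ)) = - f k)
    (vtest : Fin (s+1) → Fq N)
    (hvtest : ∀ b : Fin (s+1), vtest b = ∑ a ∈ Finset.range N,
        algebraMap ℚ (Fq N) (f (-((a * (s+1) + (b : ℕ) : ℕ) : ZMod (2 * N * (s+1))))) * xq N ^ a) :
    ∀ m : ℕ, (Φ ^ m) *ᵥ vtest = Wte N (s+1) f m := by
  intro m
  induction m with
  | zero =>
    funext i
    rw [pow_zero, Matrix.one_mulVec, hvtest, Wte]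
    congr 1 with a
    rw [Nat.cast_zero, zero_sub]
  | succ m ih =>
    rw [pow_succ', ← Matrix.mulVec_mulVec, ih]
    funext i
    have hmul : (Φ *ᵥ Wte N (s+1) f m) i
        = (if i = 0 then xq N else 1) * Wte N (s+1) f m (i - 1) := by
      simp only [Matrix.mulVec, dotProduct]
      simp only [hΦ, ite_mul, zero_mul]
      rw [Finset.sum_ite_eq' Finset.univ (i - 1)]
      simp
    rw [hmul]
    by_cases hi : i = 0
    · subst hi
      rw [if_pos rfl]
      have hval : (((0 : Fin (s+1)) - 1 : Fin (s+1)) : ℕ) = s := by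
        rw [zero_sub]
        exact Fin.coe_neg_one
      set G : ℕ → Fq N := fun a =>
        algebraMap ℚ (Fq N)
            (f (((m+1 : ℕ) : ZMod (2*N*(s+1))) - ((a*(s+1) : ℕ) : ZMod (2*N*(s+1))))) *
          xq N ^ a with hGdef
      have hfk : f (((m+1 : ℕ) : ZMod (2*N*(s+1))) - ((N*(s+1) : ℕ) : ZMod (2*N*(s+1))))
          = - f ((m+1 : ℕ) : ZMod (2*N*(s+1))) := by
        have h := hf (((m+1 : ℕ) : ZMod (2*N*(s+1))) - ((N*(s+1) : ℕ) : ZMod (2*N*(s+1))))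
        rw [sub_add_cancel] at h
        linarith
      have hG : G N = G 0 := by
        rw [hGdef]
        simp only [Nat.zero_mul, Nat.cast_zero, sub_zero, pow_zero, mul_one, hfk, xq_pow N]
        rw [map_neg]
        ring
      have hW : Wte N (s+1) f (m+1) 0 = ∑ a ∈ Finset.range N, G a := by
        simp only [Wte, hGdef, Fin.val_zero, Nat.add_zero]
      have hL : xq N * Wte N (s+1) f m (0 - 1) = ∑ a ∈ Finset.range N, G (a+1) := by
        rw [Wte, hval, Finset.mul_sum]
        congr 1 with a
        have harg : ((m : ℕ) : ZMod (2*N*(s+1))) - ((a*(s+1) + s : ℕ) : ZMod (2*N*(s+1)))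
            = ((m+1 : ℕ) : ZMod (2*N*(s+1))) - (((a+1)*(s+1) : ℕ) : ZMod (2*N*(s+1))) := by
          push_cast
          ring
        rw [harg, hGdef]
        ring
      rw [hL, hW]
      have hcancel : (∑ a ∈ Finset.range N, G (a+1)) + G 0
          = (∑ a ∈ Finset.range N, G a) + G N := by
        rw [← Finset.sum_range_succ', Finset.sum_range_succ]
      rw [hG] at hcancel
      exact add_right_cancel hcancel
    · rw [if_neg hi, one_mul]
      have h1 : 1 ≤ (i : ℕ) := Nat.one_le_iff_ne_zero.mpr (fun h => hi (Fin.ext h))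
      have hval : ((i - 1 : Fin (s+1)) : ℕ) = (i : ℕ) - 1 := by
        rw [Fin.coe_sub_one, if_neg hi]
      rw [Wte, Wte, hval]
      congr 1 with a
      congr 2
      have : ((a * (s+1) + ((i : ℕ) - 1) : ℕ) : ZMod (2 * N * (s+1)))
          = ((a * (s+1) + (i : ℕ) : ℕ) : ZMod (2 * N * (s+1))) - 1 := by
        push_cast [Nat.cast_sub h1]
        ring
      rw [this]
      push_cast
      ring_nf

/-- Example 2 (equations 52–53): for the BootMMPM generator `Φ(1)` and a
nega-cyclic `f : ℤ_{2Nr} → ℚ`, with test vector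
`v_test(b) = Σ_{a∈[N]} f(−(ar+b)) x^a`, the first coordinate of
`Φ(1)^m · v_test` equals `Σ_{a∈[N]} f(m − ar) x^a`; in particular its constant
term is `f(m)`. -/
theorem stmt_17 (N r : ℕ) (hN : 0 < N) [NeZero r]
    (Φ : Matrix (Fin r) (Fin r) (Fq N))
    (hΦ : ∀ i j, Φ i j = if j = i - 1 then (if i = 0 then xq N else 1) else 0)
    (f : ZMod (2 * N * r) → ℚ)
    (hf : ∀ k : ZMod (2 * N * r), f (k + (N * r : ℕ)) = - f k)
    (vtest : Fin r → Fq N)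
    (hvtest : ∀ b : Fin r, vtest b = ∑ a ∈ Finset.range N,
        algebraMap ℚ (Fq N) (f (-((a * r + (b : ℕ) : ℕ) : ZMod (2 * N * r)))) * xq N ^ a) :
    ∀ m : ℕ,
      ((Φ ^ m) *ᵥ vtest) 0 = (∑ a ∈ Finset.range N,
          algebraMap ℚ (Fq N) (f ((m : ZMod (2 * N * r)) - ((a * r : ℕ) : ZMod (2 * N * r)))) *
            xq N ^ a) ∧
        ∀ p : Polynomial ℚ, p.degree < (N : ℕ) →
          Ideal.Quotient.mk (Ideal.span ({X ^ N + 1} : Set (Polynomial ℚ))) p =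
            ((Φ ^ m) *ᵥ vtest) 0 →
          p.coeff 0 = f (m : ZMod (2 * N * r)) := by
  obtain ⟨s, rfl⟩ : ∃ s, r = s + 1 :=
    ⟨r - 1, (Nat.succ_pred_eq_of_pos (Nat.pos_of_ne_zero (NeZero.ne r))).symm⟩
  intro m
  have key := key_lemma N s hN Φ hΦ f hf vtest hvtest m
  have hfirst : ((Φ ^ m) *ᵥ vtest) 0 = (∑ a ∈ Finset.range N,
      algebraMap ℚ (Fq N)
          (f ((m : ZMod (2 * N * (s+1))) - ((a * (s+1) : ℕ) : ZMod (2 * N * (s+1))))) *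
        xq N ^ a) := by
    rw [key]
    simp only [Wte, Fin.val_zero, Nat.add_zero]
  refine ⟨hfirst, ?_⟩
  intro p hp hpeq
  rw [hfirst] at hpeq
  have halg : ∀ c : ℚ, algebraMap ℚ (Fq N) c
      = Ideal.Quotient.mk (Ideal.span ({X ^ N + 1} : Set (Polynomial ℚ))) (C c) := by
    intro c
    rw [IsScalarTower.algebraMap_apply ℚ (Polynomial ℚ) (Fq N) c,
      Ideal.Quotient.algebraMap_eq, Polynomial.algebraMap_eq]
  set q : Polynomial ℚ := ∑ a ∈ Finset.range N,
      C (f ((m : ZMod (2 * N * (s+1))) - ((a * (s+1) : ℕ) : ZMod (2 * N * (s+1))))) * X ^ a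
    with hq
  have hqdeg : q.degree < (N : ℕ) := by
    refine lt_of_le_of_lt (Polynomial.degree_sum_le _ _) ?_
    rw [Finset.sup_lt_iff (by exact_mod_cast WithBot.bot_lt_coe N)]
    intro a ha
    refine lt_of_le_of_lt (Polynomial.degree_C_mul_X_pow_le _ _) ?_
    exact_mod_cast Finset.mem_range.mp ha
  have hmkq : Ideal.Quotient.mk (Ideal.span ({X ^ N + 1} : Set (Polynomial ℚ))) q
      = (∑ a ∈ Finset.range N,
          algebraMap ℚ (Fq N)
              (f ((m : ZMod (2 * N * (s+1))) - ((a * (s+1) : ℕ) : ZMod (2 * N * (s+1))))) *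
            xq N ^ a) := by
    rw [hq, map_sum]
    congr 1 with a
  have hpq : p = q := by
    have hmem : p - q ∈ Ideal.span ({X ^ N + 1} : Set (Polynomial ℚ)) :=
      (Ideal.Quotient.eq).mp (hpeq.trans hmkq.symm)
    have hdvd : (X ^ N + 1 : Polynomial ℚ) ∣ p - q := Ideal.mem_span_singleton.mp hmem
    by_contra hne
    have hsub : p - q ≠ 0 := sub_ne_zero.mpr hne
    have hle : (X ^ N + 1 : Polynomial ℚ).degree ≤ (p - q).degree :=
      Polynomial.degree_le_of_dvd hdvd hsub
    have hdegX : (X ^ N + 1 : Polynomial ℚ).degree = (N : ℕ) := by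
      have := Polynomial.degree_X_pow_add_C hN (1 : ℚ)
      rwa [map_one] at this
    have hlt : (p - q).degree < (N : ℕ) :=
      lt_of_le_of_lt (Polynomial.degree_sub_le _ _) (max_lt hp hqdeg)
    rw [hdegX] at hle
    exact absurd (lt_of_le_of_lt hle hlt) (lt_irrefl _)
  rw [hpq, hq, Polynomial.finset_sum_coeff]
  simp only [Polynomial.coeff_C_mul, Polynomial.coeff_X_pow, mul_ite, mul_one, mul_zero]
  rw [Finset.sum_ite_eq (Finset.range N) 0]
  simp [Finset.mem_range, hN]
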